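/- Energy estimate for the mean-zero local problem (Lemma 4.1 of the paper): let ω be a bounded domain with Poincaré constant C_P as above, let f ∈ L²(ω), and suppose C_P^{1/2} H k < 1. If u ∈ H₀¹(ω) satisfies −(Δ + k²)u = f − avg_ω f weakly (where avg_ω f is the mean of f over ω), then ‖∇u‖_{L²(ω)} ≤ C_e C_P^{1/2} H ‖f‖_{L²(ω)}, with C_e = (1 − C_P (Hk)²)^{-1}. -/

import Mathlib

/-!
Testing the weak formulation with `u` itself gives `‖∇u‖² - k²‖u‖² = ∫ (f - avg f) u`.
Young's inequality bounds the right side by `ε/2 ‖f - avg f‖² + ‖u‖²/(2ε)`, and subtracting the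
mean does not increase the `L²` norm. The Poincaré inequality `‖u‖² ≤ C_P H² ‖∇u‖²` then leaves
the margin `(1 - C_P H²k²) ‖∇u‖²` on the left, which absorbs the `u`-term for a suitable `ε`.
Young's inequality replaces Cauchy–Schwarz because only `u²` is assumed integrable: `u` itself
need not be measurable.
-/

open MeasureTheory
open scoped RealInnerProductSpace

theorem mul_le_young {ε : ℝ} (hε : 0 < ε) (a b : ℝ) :
    a * b ≤ ε / 2 * a ^ 2 + b ^ 2 / (2 * ε) := by
  have hgap : ε / 2 * a ^ 2 + b ^ 2 / (2 * ε) - a * b = (ε * a - b) ^ 2 / (2 * ε) := by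
    field_simp
    ring
  linarith [hgap ▸ div_nonneg (sq_nonneg (ε * a - b)) (by positivity : (0 : ℝ) ≤ 2 * ε)]

section Integral

variable {α : Type*} [MeasurableSpace α] {μ : Measure α} {f g : α → ℝ}

theorem integral_mul_le_young (hf : Integrable (fun x => f x ^ 2) μ)
    (hg : Integrable (fun x => g x ^ 2) μ) {ε : ℝ} (hε : 0 < ε) :
    ∫ x, f x * g x ∂μ ≤ ε / 2 * ∫ x, f x ^ 2 ∂μ + (∫ x, g x ^ 2 ∂μ) / (2 * ε) := by
  have hbound : Integrable (fun x => ε / 2 * f x ^ 2 + g x ^ 2 / (2 * ε)) μ :=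
    (hf.const_mul _).add (hg.div_const _)
  calc ∫ x, f x * g x ∂μ ≤ ∫ x, ‖f x * g x‖ ∂μ :=
        (le_abs_self _).trans (norm_integral_le_integral_norm (fun x => f x * g x))
    _ ≤ ∫ x, (ε / 2 * f x ^ 2 + g x ^ 2 / (2 * ε)) ∂μ := by
        refine integral_mono_of_nonneg (.of_forall fun _ => norm_nonneg _) hbound
          (.of_forall fun x => ?_)
        simpa only [Real.norm_eq_abs, abs_mul, sq_abs] using mul_le_young hε |f x| |g x|
    _ = ε / 2 * ∫ x, f x ^ 2 ∂μ + (∫ x, g x ^ 2 ∂μ) / (2 * ε) := by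
        rw [integral_add (hf.const_mul _) (hg.div_const _), integral_const_mul, integral_div]

theorem average_eq_zero_of_not_isFiniteMeasure (hμ : ¬IsFiniteMeasure μ) :
    ⨍ x, f x ∂μ = 0 := by
  rw [average_eq, measureReal_def, not_isFiniteMeasure_iff.1 hμ]
  simp

theorem integral_sub_average_sq [IsFiniteMeasure μ] (hf : Integrable f μ)
    (hf2 : Integrable (fun x => f x ^ 2) μ) :
    ∫ x, (f x - ⨍ y, f y ∂μ) ^ 2 ∂μ = ∫ x, f x ^ 2 ∂μ - μ.real Set.univ * (⨍ y, f y ∂μ) ^ 2 := by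
  set c := ⨍ y, f y ∂μ
  have hexpand : (fun x => (f x - c) ^ 2) = fun x => f x ^ 2 - 2 * c * f x + c ^ 2 := by
    funext x; ring
  have hlin : Integrable (fun x => f x ^ 2 - 2 * c * f x) μ := hf2.sub (hf.const_mul _)
  rw [hexpand, integral_add hlin (integrable_const _), integral_sub hf2 (hf.const_mul _),
    integral_const_mul, integral_const, smul_eq_mul, ← measure_smul_average μ f, smul_eq_mul]
  ring

theorem integrable_sub_average_sq (hf : Integrable f μ)
    (hf2 : Integrable (fun x => f x ^ 2) μ) :
    Integrable (fun x => (f x - ⨍ y, f y ∂μ) ^ 2) μ := by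
  by_cases hμ : IsFiniteMeasure μ
  · have hexpand : (fun x => (f x - ⨍ y, f y ∂μ) ^ 2) =
        fun x => f x ^ 2 - 2 * (⨍ y, f y ∂μ) * f x + (⨍ y, f y ∂μ) ^ 2 := by
      funext x; ring
    rw [hexpand]
    exact (hf2.sub (hf.const_mul _)).add (integrable_const _)
  · simpa [average_eq_zero_of_not_isFiniteMeasure hμ] using hf2

theorem integral_sub_average_sq_le (hf : Integrable f μ)
    (hf2 : Integrable (fun x => f x ^ 2) μ) :
    ∫ x, (f x - ⨍ y, f y ∂μ) ^ 2 ∂μ ≤ ∫ x, f x ^ 2 ∂μ := by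
  by_cases hμ : IsFiniteMeasure μ
  · rw [integral_sub_average_sq hf hf2, sub_le_self_iff]
    positivity
  · simp [average_eq_zero_of_not_isFiniteMeasure hμ]

end Integral

theorem sqrt_le_of_poincare_of_forall_young {A B F s k : ℝ} (hs : 0 < s) (hk : 0 ≤ k)
    (hsk : s * k < 1) (hA : 0 ≤ A) (hP : Real.sqrt B ≤ s * Real.sqrt A)
    (hyoung : ∀ ε > 0, A - k ^ 2 * B ≤ ε / 2 * F + B / (2 * ε)) :
    Real.sqrt A ≤ (1 - s ^ 2 * k ^ 2)⁻¹ * s * Real.sqrt F := by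
  have hθ : 0 < 1 - s ^ 2 * k ^ 2 := by
    rw [← mul_pow, sub_pos, sq_lt_one_iff₀ (by positivity)]; exact hsk
  set θ := 1 - s ^ 2 * k ^ 2
  have hB : B ≤ s ^ 2 * A := by
    rwa [Real.sqrt_le_left (by positivity), mul_pow, Real.sq_sqrt hA] at hP
  -- ε = s² / θ makes the Young term `B / (2ε) ≤ θ A / 2` absorbable by the coercivity margin θ A.
  have h := hyoung (s ^ 2 / θ) (by positivity)
  have hkB : k ^ 2 * B ≤ (1 - θ) * A := by
    calc k ^ 2 * B ≤ k ^ 2 * (s ^ 2 * A) := by gcongr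
      _ = (1 - θ) * A := by ring
  have hBε : B / (2 * (s ^ 2 / θ)) ≤ θ / 2 * A := by
    rw [div_le_iff₀ (by positivity)]
    calc B ≤ s ^ 2 * A := hB
      _ = θ / 2 * A * (2 * (s ^ 2 / θ)) := by field_simp
  have hθA : θ * A ≤ s ^ 2 / θ * F := by linarith
  have hAF : A ≤ (θ⁻¹ * s) ^ 2 * F := by
    calc A = θ⁻¹ * (θ * A) := by field_simp
      _ ≤ θ⁻¹ * (s ^ 2 / θ * F) := by gcongr
      _ = (θ⁻¹ * s) ^ 2 * F := by ring
  calc Real.sqrt A ≤ Real.sqrt ((θ⁻¹ * s) ^ 2 * F) := Real.sqrt_le_sqrt hAF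
    _ = θ⁻¹ * s * Real.sqrt F := by
      rw [Real.sqrt_mul (sq_nonneg _), Real.sqrt_sq (by positivity)]

/-- `T` encodes `H₀¹(ω)` as pairs (function, weak gradient). -/
theorem mean_zero_local_energy_estimate_general (d : ℕ) (ω : Set (EuclideanSpace ℝ (Fin d)))
    (H k CP : ℝ) (hH : 0 < H) (hk : 0 < k) (hCP : 0 < CP)
    (hres : Real.sqrt CP * H * k < 1)
    (T : Set ((EuclideanSpace ℝ (Fin d) → ℝ) ×
      (EuclideanSpace ℝ (Fin d) → EuclideanSpace ℝ (Fin d))))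
    (u : EuclideanSpace ℝ (Fin d) → ℝ)
    (gu : EuclideanSpace ℝ (Fin d) → EuclideanSpace ℝ (Fin d))
    (f : EuclideanSpace ℝ (Fin d) → ℝ)
    (huT : (u, gu) ∈ T)
    (hPoincare : ∀ p ∈ T,
      Real.sqrt (∫ x in ω, (p.1 x) ^ 2) ≤
        Real.sqrt CP * H * Real.sqrt (∫ x in ω, ‖p.2 x‖ ^ 2))
    (hweak : ∀ p ∈ T,
      (∫ x in ω, ⟪gu x, p.2 x⟫) - k ^ 2 * ∫ x in ω, u x * p.1 x =
        ∫ x in ω, (f x - (volume ω).toReal⁻¹ * ∫ y in ω, f y) * p.1 x)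
    (hf : Integrable (fun x => (f x) ^ 2) (volume.restrict ω))
    (hf1 : Integrable f (volume.restrict ω))
    (hu : Integrable (fun x => (u x) ^ 2) (volume.restrict ω)) :
    Real.sqrt (∫ x in ω, ‖gu x‖ ^ 2) ≤
      (1 - CP * (H * k) ^ 2)⁻¹ * Real.sqrt CP * H * Real.sqrt (∫ x in ω, (f x) ^ 2) := by
  have hs : (Real.sqrt CP * H) ^ 2 = CP * H ^ 2 := by rw [mul_pow, Real.sq_sqrt hCP.le]
  rw [show 1 - CP * (H * k) ^ 2 = 1 - (Real.sqrt CP * H) ^ 2 * k ^ 2 by rw [hs]; ring,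
    mul_assoc _ (Real.sqrt CP) H]
  refine sqrt_le_of_poincare_of_forall_young (by positivity) hk.le hres
    (integral_nonneg fun _ => by positivity) (hPoincare (u, gu) huT) fun ε hε => ?_
  have havg : (volume ω).toReal⁻¹ * ∫ y in ω, f y = ⨍ y in ω, f y := by
    rw [setAverage_eq]; rfl
  have hw := hweak (u, gu) huT
  simp only [real_inner_self_eq_norm_sq, ← sq, havg] at hw
  rw [hw]
  calc ∫ x in ω, (f x - ⨍ y in ω, f y) * u x
      ≤ ε / 2 * (∫ x in ω, (f x - ⨍ y in ω, f y) ^ 2) + (∫ x in ω, u x ^ 2) / (2 * ε) :=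
        integral_mul_le_young (integrable_sub_average_sq hf1 hf) hu hε
    _ ≤ ε / 2 * (∫ x in ω, f x ^ 2) + (∫ x in ω, u x ^ 2) / (2 * ε) := by
        gcongr ε / 2 * ?_ + _; exact integral_sub_average_sq_le hf1 hf

/-- Energy estimate for the mean-zero local problem (Lemma 4.1): if `u ∈ H₀¹(ω)` (with
gradient `gu`, belonging to the test class `T` representing `H₀¹(ω)`) weakly solves
`-(Δ + k²)u = f - avg_ω f`, the Poincaré inequality with constant `C_P` holds on `T`, and
`√C_P · H · k < 1`, then `‖∇u‖_{L²(ω)} ≤ C_e √C_P H ‖f‖_{L²(ω)}` with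
`C_e = (1 - C_P (Hk)²)⁻¹`. -/
theorem mean_zero_local_energy_estimate (d : ℕ) (ω : Set (EuclideanSpace ℝ (Fin d)))
    (H k CP : ℝ) (hH : 0 < H) (hk : 0 < k) (hCP : 0 < CP)
    (hres : Real.sqrt CP * H * k < 1)
    (T : Set ((EuclideanSpace ℝ (Fin d) → ℝ) ×
      (EuclideanSpace ℝ (Fin d) → EuclideanSpace ℝ (Fin d))))
    (u : EuclideanSpace ℝ (Fin d) → ℝ)
    (gu : EuclideanSpace ℝ (Fin d) → EuclideanSpace ℝ (Fin d))
    (f : EuclideanSpace ℝ (Fin d) → ℝ)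
    (huT : (u, gu) ∈ T)
    (hPoincare : ∀ p ∈ T,
      Real.sqrt (∫ x in ω, (p.1 x) ^ 2) ≤
        Real.sqrt CP * H * Real.sqrt (∫ x in ω, ‖p.2 x‖ ^ 2))
    (hweak : ∀ p ∈ T,
      (∫ x in ω, ⟪gu x, p.2 x⟫) - k ^ 2 * ∫ x in ω, u x * p.1 x =
        ∫ x in ω, (f x - (volume ω).toReal⁻¹ * ∫ y in ω, f y) * p.1 x)
    (hf : Integrable (fun x => (f x) ^ 2) (volume.restrict ω))
    (hf1 : Integrable f (volume.restrict ω))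
    (hu : Integrable (fun x => (u x) ^ 2) (volume.restrict ω))
    (hgu : Integrable (fun x => ‖gu x‖ ^ 2) (volume.restrict ω)) :
    Real.sqrt (∫ x in ω, ‖gu x‖ ^ 2) ≤
      (1 - CP * (H * k) ^ 2)⁻¹ * Real.sqrt CP * H * Real.sqrt (∫ x in ω, (f x) ^ 2) :=
  mean_zero_local_energy_estimate_general d ω H k CP hH hk hCP hres T u gu f huT hPoincare hweak hf
    hf1 hu
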